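/- arXiv:1901.01991 — 5 statements merged into one kernel-verified Lean document; each statement's English description precedes it below -/
import Mathlib

section
/- (Lovász–Stein covering lemma) Let Γ be a finite bipartite graph with parts P and Q such that every vertex p ∈ P has degree at least a ≥ 1 and every vertex q ∈ Q has degree at most b ≥ 1. Then there exists a subset Q' ⊆ Q covering P (i.e., every p ∈ P has a neighbour in Q') with |Q'| ≤ (|Q|/a)(1 + ln b). -/
/-!
Greedy covering, analysed with harmonic weights. The invariant is that a set `S` of still
uncovered points of `P` can be covered by some `Q'` with `a |Q'| ≤ ∑_q H(|N(q) ∩ S|)`, `H` the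
harmonic numbers. Choose `q₀` with the largest number `u` of uncovered neighbours and remove them:
a vertex `q` that loses `r_q` of its `d_q ≤ u` uncovered neighbours has its weight decrease by at
least `r_q / u`, and `∑_q r_q ≥ a u` by double counting the edges at the `u` removed points, so the
total weight drops by at least `a`, which pays for `q₀`. Initially each weight is
`H(deg q) ≤ H(b) ≤ 1 + ln b`.
-/

open Finset

theorem div_le_harmonic_sub_harmonic {m n u : ℕ} (hmn : m ≤ n) (hnu : n ≤ u) :
    ((n - m : ℕ) : ℚ) / u ≤ harmonic n - harmonic m := by
  rw [harmonic, harmonic, ← sum_Ico_eq_sub _ hmn]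
  calc ((n - m : ℕ) : ℚ) / u = ∑ _i ∈ Ico m n, (u : ℚ)⁻¹ := by
        rw [sum_const, Nat.card_Ico, nsmul_eq_mul, div_eq_mul_inv]
    _ ≤ ∑ i ∈ Ico m n, ((i + 1 : ℕ) : ℚ)⁻¹ := sum_le_sum fun i hi => by
        have := (mem_Ico.1 hi).2
        gcongr
        omega

theorem harmonic_monotone : Monotone harmonic := fun _ _ hmn =>
  sub_nonneg.1 <| (div_nonneg (Nat.cast_nonneg _) (Nat.cast_nonneg _)).trans
    (div_le_harmonic_sub_harmonic hmn le_rfl)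

section GreedyCover

variable {P Q : Type*} [Fintype Q] (E : P → Q → Prop) [DecidableRel E]

theorem le_sum_harmonic_sub_of_forall_le {a : ℕ} (hP : ∀ p, a ≤ #{q | E p q}) (S : Finset P)
    {q₀ : Q} (hq₀ : ∀ q, #{p ∈ S | E p q} ≤ #{p ∈ S | E p q₀})
    (hpos : 0 < #{p ∈ S | E p q₀}) :
    (a : ℚ) ≤ ∑ q, (harmonic #{p ∈ S | E p q} - harmonic #{p ∈ {p ∈ S | ¬E p q₀} | E p q}) := by
  set T := {p ∈ S | E p q₀}
  have hsplit : ∀ q, #{p ∈ T | E p q} + #{p ∈ {p ∈ S | ¬E p q₀} | E p q} = #{p ∈ S | E p q} :=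
    fun q => by
      rw [filter_comm, filter_comm (fun p => ¬E p q₀), card_filter_add_card_filter_not]
  have hdouble : a * #T ≤ ∑ q, #{p ∈ T | E p q} :=
    calc a * #T = #T • a := by rw [smul_eq_mul, mul_comm]
      _ ≤ ∑ p ∈ T, #{q | E p q} := card_nsmul_le_sum _ _ _ fun p _ => hP p
      _ = ∑ q, #{p ∈ T | E p q} := sum_card_bipartiteAbove_eq_sum_card_bipartiteBelow E
  have hT : (0 : ℚ) < #T := by exact_mod_cast hpos
  calc (a : ℚ) = a * #T / #T := by field_simp
    _ ≤ (∑ q, #{p ∈ T | E p q} : ℕ) / #T := by gcongr; exact_mod_cast hdouble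
    _ = ∑ q, (#{p ∈ T | E p q} : ℚ) / #T := by rw [Nat.cast_sum, sum_div]
    _ ≤ _ := sum_le_sum fun q _ => by
        have := div_le_harmonic_sub_harmonic (Nat.le_add_left _ _) ((hsplit q).le.trans (hq₀ q))
        rwa [Nat.add_sub_cancel, hsplit q] at this

theorem exists_cover_mul_card_le_sum_harmonic [DecidableEq Q] {a : ℕ} (ha : 0 < a)
    (hP : ∀ p, a ≤ #{q | E p q}) (S : Finset P) :
    ∃ Q' : Finset Q, (∀ p ∈ S, ∃ q ∈ Q', E p q) ∧
      (a * #Q' : ℚ) ≤ ∑ q, harmonic #{p ∈ S | E p q} := by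
  induction S using Finset.strongInduction with
  | H S ih =>
  obtain rfl | ⟨p₀, hp₀⟩ := S.eq_empty_or_nonempty
  · exact ⟨∅, by simp, by simp⟩
  obtain ⟨q₁, hq₁⟩ := card_pos.1 (ha.trans_le (hP p₀))
  obtain ⟨q₀, -, hq₀⟩ := exists_max_image univ (fun q => #{p ∈ S | E p q}) ⟨q₁, mem_univ _⟩
  have hpos : 0 < #{p ∈ S | E p q₀} :=
    (card_pos.2 ⟨p₀, mem_filter.2 ⟨hp₀, (mem_filter.1 hq₁).2⟩⟩).trans_le (hq₀ q₁ (mem_univ _))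
  have hssubset : {p ∈ S | ¬E p q₀} ⊂ S := by
    obtain ⟨p, hp⟩ := card_pos.1 hpos
    exact filter_ssubset.2 ⟨p, (mem_filter.1 hp).1, not_not.2 (mem_filter.1 hp).2⟩
  obtain ⟨Q', hcover, hcard⟩ := ih _ hssubset
  refine ⟨insert q₀ Q', fun p hp => ?_, ?_⟩
  · by_cases hpq₀ : E p q₀
    · exact ⟨q₀, mem_insert_self _ _, hpq₀⟩
    · obtain ⟨q, hq, hpq⟩ := hcover p (mem_filter.2 ⟨hp, hpq₀⟩)
      exact ⟨q, mem_insert_of_mem hq, hpq⟩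
  · have hdrop := le_sum_harmonic_sub_of_forall_le E hP S (fun q => hq₀ q (mem_univ _)) hpos
    rw [sum_sub_distrib] at hdrop
    calc (a * #(insert q₀ Q') : ℚ) ≤ a * (#Q' + 1) := by
          gcongr; exact_mod_cast card_insert_le _ _
      _ = a * #Q' + a := by ring
      _ ≤ _ := by linarith

end GreedyCover

theorem lovasz_stein_general {P Q : Type*} [Fintype P] [Fintype Q] (E : P → Q → Prop)
    (a b : ℕ) (ha : 1 ≤ a)
    (hP : ∀ p : P, a ≤ Nat.card {q : Q // E p q})
    (hQ : ∀ q : Q, Nat.card {p : P // E p q} ≤ b) :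
    ∃ Q' : Finset Q, (∀ p : P, ∃ q ∈ Q', E p q) ∧
      (Q'.card : ℝ) ≤ ((Fintype.card Q : ℝ) / a) * (1 + Real.log b) := by
  classical
  simp only [Nat.card_eq_fintype_card, Fintype.card_subtype] at hP hQ
  obtain ⟨Q', hcover, hcard⟩ := exists_cover_mul_card_le_sum_harmonic E ha hP univ
  refine ⟨Q', fun p => hcover p (mem_univ p), ?_⟩
  have hbound : (a * #Q' : ℝ) ≤ Fintype.card Q * (1 + Real.log b) :=
    calc (a * #Q' : ℝ) ≤ ∑ q, (harmonic #{p | E p q} : ℝ) := by exact_mod_cast hcard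
      _ ≤ ∑ _q : Q, (1 + Real.log b) := sum_le_sum fun q _ =>
          (Rat.cast_le.2 (harmonic_monotone (hQ q))).trans (harmonic_le_one_add_log b)
      _ = Fintype.card Q * (1 + Real.log b) := by rw [sum_const, card_univ, nsmul_eq_mul]
  have ha' : (0 : ℝ) < a := by exact_mod_cast ha
  rw [div_mul_eq_mul_div, le_div_iff₀ ha']
  linarith

/-- Lovász–Stein: in a finite bipartite graph with parts `P`, `Q`
(adjacency relation `E`), if every `p ∈ P` has degree at least `a ≥ 1` and every
`q ∈ Q` has degree at most `b ≥ 1`, then some `Q' ⊆ Q` covering `P` has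
`|Q'| ≤ (|Q|/a)(1 + ln b)`. -/
theorem lovasz_stein {P Q : Type*} [Fintype P] [Fintype Q] (E : P → Q → Prop)
    (a b : ℕ) (ha : 1 ≤ a) (hb : 1 ≤ b)
    (hP : ∀ p : P, a ≤ Nat.card {q : Q // E p q})
    (hQ : ∀ q : Q, Nat.card {p : P // E p q} ≤ b) :
    ∃ Q' : Finset Q, (∀ p : P, ∃ q ∈ Q', E p q) ∧
      (Q'.card : ℝ) ≤ ((Fintype.card Q : ℝ) / a) * (1 + Real.log b) :=
  lovasz_stein_general E a b ha hP hQ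
end

section
/- For any 0 < c ≤ 1/2 and any positive integer N, the sum of binomial coefficients binom(N, i) for i from 0 to ⌊cN⌋ is at most 2^(H(c)N), where H(x) = -x log₂ x - (1-x) log₂ (1-x). -/
/-- The binary entropy function (base-2 logarithms). -/
noncomputable def binEnt (x : ℝ) : ℝ := -x * Real.logb 2 x - (1 - x) * Real.logb 2 (1 - x)

open Finset in
/-- for `0 < c ≤ 1/2` and `N ≥ 1`,
`∑_{i=0}^{⌊cN⌋} binom(N,i) ≤ 2^(H(c)N)`. -/
theorem binomial_sum_le_entropy (c : ℝ) (hc0 : 0 < c) (hc : c ≤ 1 / 2) (N : ℕ) (hN : 0 < N) :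
    (∑ i ∈ range (⌊c * N⌋₊ + 1), (N.choose i : ℝ)) ≤ 2 ^ (binEnt c * N) := by
  have h1c : (0:ℝ) < 1 - c := by linarith
  have hcN0 : (0:ℝ) ≤ c * N := by positivity
  have hk : (⌊c * N⌋₊ : ℝ) ≤ c * N := Nat.floor_le hcN0
  have hkN : ⌊c * N⌋₊ ≤ N := by
    calc ⌊c * N⌋₊ ≤ ⌊((N:ℕ):ℝ)⌋₊ := by
          apply Nat.floor_mono
          have : c * N ≤ 1 * N := by
            apply mul_le_mul_of_nonneg_right (by linarith) (Nat.cast_nonneg N)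
          simpa using this
      _ = N := Nat.floor_natCast N
  have ec : ∀ (t : ℝ), (2:ℝ) ^ (Real.logb 2 c * t) = c ^ t := fun t => by
    rw [Real.rpow_mul (by norm_num), Real.rpow_logb two_pos (by norm_num) hc0]
  have ec' : ∀ (t : ℝ), (2:ℝ) ^ (Real.logb 2 (1 - c) * t) = (1 - c) ^ t := fun t => by
    rw [Real.rpow_mul (by norm_num), Real.rpow_logb two_pos (by norm_num) h1c]
  have key : ∀ i ∈ range (⌊c * N⌋₊ + 1),
      (N.choose i : ℝ) * 2 ^ (-(binEnt c * N)) ≤ c ^ i * (1 - c) ^ (N - i) * (N.choose i : ℝ) := by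
    intro i hi
    rw [mem_range, Nat.lt_succ_iff] at hi
    have hiN : i ≤ N := le_trans hi hkN
    have hicN : (i:ℝ) ≤ c * N := le_trans (by exact_mod_cast hi) hk
    have hsub : ((N - i : ℕ) : ℝ) = (N:ℝ) - i := by
      rw [Nat.cast_sub hiN]
    have e1 : c ^ i * (1 - c) ^ (N - i)
        = (2:ℝ) ^ (Real.logb 2 c * i + Real.logb 2 (1 - c) * ((N:ℝ) - i)) := by
      rw [Real.rpow_add two_pos, ec, ec', ← hsub, Real.rpow_natCast, Real.rpow_natCast]
    have e2 : (2:ℝ) ^ (-(binEnt c * N))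
        = (2:ℝ) ^ (Real.logb 2 c * (c * N) + Real.logb 2 (1 - c) * ((1 - c) * N)) := by
      congr 1
      unfold binEnt
      ring
    have hlog : Real.logb 2 c ≤ Real.logb 2 (1 - c) :=
      Real.logb_le_logb_of_le (by norm_num) hc0 (by linarith)
    have hexp : Real.logb 2 c * (c * N) + Real.logb 2 (1 - c) * ((1 - c) * N)
        ≤ Real.logb 2 c * i + Real.logb 2 (1 - c) * ((N:ℝ) - i) := by
      nlinarith [mul_nonneg (sub_nonneg.mpr hlog) (sub_nonneg.mpr hicN)]
    rw [e1, e2, mul_comm]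
    apply mul_le_mul_of_nonneg_right _ (Nat.cast_nonneg _)
    exact (Real.rpow_le_rpow_left_iff (by norm_num)).mpr hexp
  have hone : ∑ i ∈ range (N + 1), c ^ i * (1 - c) ^ (N - i) * (N.choose i : ℝ) = 1 := by
    rw [← add_pow]
    norm_num
  have main : (∑ i ∈ range (⌊c * N⌋₊ + 1), (N.choose i : ℝ)) * 2 ^ (-(binEnt c * N)) ≤ 1 := by
    calc (∑ i ∈ range (⌊c * N⌋₊ + 1), (N.choose i : ℝ)) * 2 ^ (-(binEnt c * N))
        = ∑ i ∈ range (⌊c * N⌋₊ + 1), (N.choose i : ℝ) * 2 ^ (-(binEnt c * N)) := by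
          rw [Finset.sum_mul]
      _ ≤ ∑ i ∈ range (⌊c * N⌋₊ + 1), c ^ i * (1 - c) ^ (N - i) * (N.choose i : ℝ) :=
          Finset.sum_le_sum key
      _ ≤ ∑ i ∈ range (N + 1), c ^ i * (1 - c) ^ (N - i) * (N.choose i : ℝ) := by
          apply Finset.sum_le_sum_of_subset_of_nonneg
          · exact Finset.range_subset_range.mpr (by omega)
          · intro i _ _
            positivity
      _ = 1 := hone
  have h2 : (0:ℝ) < 2 ^ (binEnt c * N) := Real.rpow_pos_of_pos two_pos _
  rw [Real.rpow_neg (by norm_num), ← div_eq_mul_inv, div_le_one h2] at main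
  exact main
end

section
/- In a bipartite graph Σ with parts X and Y, if A ⊆ X is 2-linked then its closure [A] = {v ∈ X : N(v) ⊆ N(A)} is also 2-linked. -/
/-- A set `A` is `k`-linked in `G` if any two of its vertices are joined by a sequence of
vertices of `A` in which consecutive vertices are at graph distance at most `k`. -/
def IsLinked {V : Type*} (G : SimpleGraph V) (k : ℕ) (A : Set V) : Prop :=
  ∀ u ∈ A, ∀ v ∈ A, ∃ (m : ℕ) (f : Fin (m + 1) → V),
    f 0 = u ∧ f (Fin.last m) = v ∧ (∀ i, f i ∈ A) ∧
    ∀ i : Fin m, G.Reachable (f i.castSucc) (f i.succ) ∧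
      G.dist (f i.castSucc) (f i.succ) ≤ k

/-- The neighbourhood of a set of vertices. -/
def nbhd {V : Type*} (G : SimpleGraph V) (A : Set V) : Set V := {y | ∃ a ∈ A, G.Adj a y}

/-!
A vertex `w` of `[A]` has a neighbour `y` (regularity, `d ≥ 1`), and `y ∈ N(A)`, so `w` is at
distance at most 2 from some `a ∈ A`. Hence any two vertices of `[A]` are linked by prepending and
appending one step to a 2-linked chain in `A ⊆ [A]`.
-/

section Chain

variable {α : Type*} {r : α → α → Prop} {m : ℕ} {f : Fin (m + 1) → α}

theorem Fin.rel_cons_castSucc_succ {a : α} (ha : r a (f 0))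
    (hf : ∀ i : Fin m, r (f i.castSucc) (f i.succ)) (i : Fin (m + 1)) :
    r ((Fin.cons a f : Fin (m + 2) → α) i.castSucc)
      ((Fin.cons a f : Fin (m + 2) → α) i.succ) := by
  cases i using Fin.cases with
  | zero => simpa using ha
  | succ j => simpa [← Fin.succ_castSucc] using hf j

theorem Fin.rel_snoc_castSucc_succ {a : α} (ha : r (f (Fin.last m)) a)
    (hf : ∀ i : Fin m, r (f i.castSucc) (f i.succ)) (i : Fin (m + 1)) :
    r ((Fin.snoc f a : Fin (m + 2) → α) i.castSucc)
      ((Fin.snoc f a : Fin (m + 2) → α) i.succ) := by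
  cases i using Fin.lastCases with
  | last => simpa using ha
  | cast j => rw [Fin.succ_castSucc, Fin.snoc_castSucc, Fin.snoc_castSucc]; exact hf j

end Chain

theorem IsLinked.of_forall_near {V : Type*} {G : SimpleGraph V} {k : ℕ} {A B : Set V}
    (hA : IsLinked G k A) (hAB : A ⊆ B)
    (hnear : ∀ w ∈ B, ∃ a ∈ A, G.Reachable w a ∧ G.dist w a ≤ k) : IsLinked G k B := by
  intro u hu v hv
  obtain ⟨a, haA, hua⟩ := hnear u hu
  obtain ⟨b, hbA, hvb⟩ := hnear v hv
  obtain ⟨m, f, rfl, rfl, hfA, hf⟩ := hA a haA b hbA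
  refine ⟨m + 2, Fin.cons u (Fin.snoc f v), by simp, by simp, ?_, ?_⟩
  · intro i
    cases i using Fin.cases with
    | zero => simpa using hu
    | succ j =>
      cases j using Fin.lastCases with
      | last => simpa using hv
      | cast j => simpa using hAB (hfA j)
  · have hbv : G.Reachable (f (Fin.last m)) v ∧ G.dist (f (Fin.last m)) v ≤ k :=
      ⟨hvb.1.symm, G.dist_comm ▸ hvb.2⟩
    let near : V → V → Prop := fun x y => G.Reachable x y ∧ G.dist x y ≤ k
    exact Fin.rel_cons_castSucc_succ (r := near) (by simpa using hua)
      (Fin.rel_snoc_castSucc_succ (r := near) hbv hf)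

theorem SimpleGraph.exists_dist_le_two_of_neighborSet_subset {V : Type*} {G : SimpleGraph V}
    {A : Set V} {w : V} (hw : (G.neighborSet w).Nonempty) (hN : G.neighborSet w ⊆ nbhd G A) :
    ∃ a ∈ A, G.Reachable w a ∧ G.dist w a ≤ 2 := by
  obtain ⟨y, hwy⟩ := hw
  obtain ⟨a, haA, hay⟩ := hN hwy
  let p : G.Walk w a := .cons hwy (.cons hay.symm .nil)
  exact ⟨a, haA, p.reachable, G.dist_le p⟩

theorem closure_linked_general {V : Type*} [Fintype V] (G : SimpleGraph V) [DecidableRel G.Adj]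
    (d : ℕ) (hd : 1 ≤ d) (hreg : ∀ v : V, G.degree v = d) (X : Set V)
    (A : Set V) (hAX : A ⊆ X) (hA : IsLinked G 2 A) :
    IsLinked G 2 {v ∈ X | G.neighborSet v ⊆ nbhd G A} := by
  refine hA.of_forall_near (fun a ha => ⟨hAX ha, fun y hy => ⟨a, ha, hy⟩⟩) ?_
  rintro w ⟨-, hw⟩
  have hdeg : 0 < G.degree w := hreg w ▸ hd
  exact SimpleGraph.exists_dist_le_two_of_neighborSet_subset
    (G.degree_pos_iff_nonempty.mp hdeg) hw

/-- in a `d`-regular bipartite graph with parts `X`, `Y`, if `A ⊆ X` is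
`2`-linked then its closure `[A] = {v ∈ X : N(v) ⊆ N(A)}` is `2`-linked. -/
theorem closure_linked {V : Type*} [Fintype V] (G : SimpleGraph V) [DecidableRel G.Adj]
    (d : ℕ) (hd : 1 ≤ d) (hreg : ∀ v : V, G.degree v = d) (X Y : Set V)
    (hpart : ∀ v : V, (v ∈ X ∧ v ∉ Y) ∨ (v ∈ Y ∧ v ∉ X))
    (hbip : ∀ u v : V, G.Adj u v → (u ∈ X ∧ v ∈ Y) ∨ (u ∈ Y ∧ v ∈ X))
    (A : Set V) (hAX : A ⊆ X) (hA : IsLinked G 2 A) :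
    IsLinked G 2 {v ∈ X | G.neighborSet v ⊆ nbhd G A} :=
  closure_linked_general G d hd hreg X A hAX hA
end

section
/- Let I be an independent set in the hypercube Q_d with bipartition classes E, O, and let [·] denote closure ([A] = {v on the same side as A : N(v) ⊆ N(A)}). Then there are no edges of Q_d between [I ∩ E] and [I ∩ O]. -/
/-- The `d`-dimensional hypercube graph. -/
def cubeGraph (d : ℕ) : SimpleGraph (Fin d → ZMod 2) where
  Adj x y := hammingDist x y = 1
  symm := by constructor; intro x y h; exact (hammingDist_comm y x).trans h
  loopless := by constructor; intro x h; simp [hammingDist_self] at h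

/-- An independent set: no two of its vertices are adjacent. -/
def IsIndep {V : Type*} (G : SimpleGraph V) (s : Set V) : Prop :=
  ∀ u ∈ s, ∀ v ∈ s, ¬ G.Adj u v

/-- The even bipartition class of the hypercube. -/
def evenSide (d : ℕ) : Set (Fin d → ZMod 2) := {v | ∑ i, v i = 0}

/-- The odd bipartition class of the hypercube. -/
def oddSideSet (d : ℕ) : Set (Fin d → ZMod 2) := {v | ∑ i, v i = 1}

/-- The closure of `A` within a side `X`: vertices of `X` all of whose neighbours lie
in `N(A)`. -/
def closure' {V : Type*} (G : SimpleGraph V) (X A : Set V) : Set V :=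
  {v ∈ X | G.neighborSet v ⊆ nbhd G A}

namespace SimpleGraph

variable {V : Type*} (G : SimpleGraph V)

theorem exists_adj_of_mem_closure' {X A : Set V} {v w : V} (hv : v ∈ closure' G X A)
    (hvw : G.Adj v w) : ∃ a ∈ A, G.Adj a w :=
  hv.2 hvw

theorem not_adj_closure' {X Y A B : Set V} (hAB : ∀ a ∈ A, ∀ b ∈ B, ¬ G.Adj a b) :
    ∀ u ∈ closure' G X A, ∀ v ∈ closure' G Y B, ¬ G.Adj u v := by
  intro u hu v hv huv
  obtain ⟨a, ha, hav⟩ := G.exists_adj_of_mem_closure' hu huv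
  obtain ⟨b, hb, hba⟩ := G.exists_adj_of_mem_closure' hv hav.symm
  exact hAB a ha b hb hba.symm

end SimpleGraph

/-- for an independent set `I` of `Q_d`, there are no edges between
`[I ∩ E]` and `[I ∩ O]`. -/
theorem no_edges_between_closures (d : ℕ) (I : Set (Fin d → ZMod 2))
    (hI : IsIndep (cubeGraph d) I) :
    ∀ u ∈ closure' (cubeGraph d) (evenSide d) (I ∩ evenSide d),
      ∀ v ∈ closure' (cubeGraph d) (oddSideSet d) (I ∩ oddSideSet d),
        ¬ (cubeGraph d).Adj u v :=
  (cubeGraph d).not_adj_closure' fun a ha b hb => hI a ha.1 b hb.1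
end

section
/- Let Σ be a d-regular bipartite graph with parts X, Y, let A ⊆ X with G = N(A), a = |[A]|, g = |G|, t = g - a, and let 1 ≤ ψ ≤ d-1. If (F, S) ∈ 2^Y × 2^X satisfies F ⊆ G, S ⊇ [A], d_F(u) ≥ d - ψ for all u ∈ S, and d_{X\S}(v) ≥ d - ψ for all v ∈ Y \ F, then |S| ≤ |F| + 2tψ/(d - ψ). -/
open Finset in
/-- Edge count between two finsets. -/
private def ec {V : Type*} (G : SimpleGraph V) [DecidableRel G.Adj]
    (P Q : Finset V) : ℕ := ∑ u ∈ P, (Q.filter (G.Adj u)).card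

open Finset in
private lemma ec_eq_sum_sum {V : Type*} (G : SimpleGraph V) [DecidableRel G.Adj]
    (P Q : Finset V) :
    ec G P Q = ∑ u ∈ P, ∑ v ∈ Q, if G.Adj u v then 1 else 0 := by
  unfold ec
  refine Finset.sum_congr rfl fun u _ => ?_
  rw [Finset.card_filter]

open Finset in
private lemma ec_comm {V : Type*} (G : SimpleGraph V) [DecidableRel G.Adj]
    (P Q : Finset V) : ec G P Q = ec G Q P := by
  rw [ec_eq_sum_sum, ec_eq_sum_sum, Finset.sum_comm]
  refine Finset.sum_congr rfl fun v _ => Finset.sum_congr rfl fun u _ => ?_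
  exact if_congr (G.adj_comm u v) rfl rfl

open Finset in
private lemma ec_mono_left {V : Type*} (G : SimpleGraph V) [DecidableRel G.Adj]
    {P₁ P₂ : Finset V} (Q : Finset V) (h : P₁ ⊆ P₂) : ec G P₁ Q ≤ ec G P₂ Q :=
  Finset.sum_le_sum_of_subset h

open Finset in
private lemma ec_mono_right {V : Type*} (G : SimpleGraph V) [DecidableRel G.Adj]
    (P : Finset V) {Q₁ Q₂ : Finset V} (h : Q₁ ⊆ Q₂) : ec G P Q₁ ≤ ec G P Q₂ :=
  Finset.sum_le_sum fun u _ => Finset.card_le_card (Finset.filter_subset_filter _ h)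

open Finset in
private lemma ec_union_right {V : Type*} [DecidableEq V] (G : SimpleGraph V) [DecidableRel G.Adj]
    (P : Finset V) {Q₁ Q₂ : Finset V} (h : Disjoint Q₁ Q₂) :
    ec G P (Q₁ ∪ Q₂) = ec G P Q₁ + ec G P Q₂ := by
  unfold ec
  rw [← Finset.sum_add_distrib]
  refine Finset.sum_congr rfl fun u _ => ?_
  rw [Finset.filter_union, Finset.card_union_of_disjoint
    (Finset.disjoint_filter_filter h)]

private lemma ncard_inter_eq {V : Type*} [Fintype V] (G : SimpleGraph V)
    [DecidableRel G.Adj] (u : V) (Q : Set V) [Fintype Q] :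
    (G.neighborSet u ∩ Q).ncard = (Q.toFinset.filter (G.Adj u)).card := by
  rw [← Set.ncard_coe_finset]
  congr 1
  ext v
  simp [and_comm]

/-- if `(F, S)` is a `ψ`-approximation for `A` in a `d`-regular bipartite
graph (i.e. `F ⊆ N(A)`, `S ⊇ [A]`, every `u ∈ S` has at least `d - ψ` neighbours in `F`,
and every `v ∈ Y \ F` has at least `d - ψ` neighbours in `X \ S`), then
`|S| ≤ |F| + 2tψ/(d - ψ)` where `t = |N(A)| - |[A]|`. -/
theorem psi_approximation_size {V : Type*} [Fintype V] (G : SimpleGraph V)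
    [DecidableRel G.Adj] (d ψ : ℕ) (hψ1 : 1 ≤ ψ) (hψd : ψ ≤ d - 1)
    (hreg : ∀ v : V, G.degree v = d) (X Y : Set V)
    (hpart : ∀ v : V, (v ∈ X ∧ v ∉ Y) ∨ (v ∈ Y ∧ v ∉ X))
    (hbip : ∀ u v : V, G.Adj u v → (u ∈ X ∧ v ∈ Y) ∨ (u ∈ Y ∧ v ∈ X))
    (A : Set V) (hAX : A ⊆ X) (F S : Set V)
    (hF : F ⊆ nbhd G A) (hS : closure' G X A ⊆ S) (hSX : S ⊆ X)
    (hdF : ∀ u ∈ S, d - ψ ≤ (G.neighborSet u ∩ F).ncard)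
    (hdS : ∀ v ∈ Y \ F, d - ψ ≤ (G.neighborSet v ∩ (X \ S)).ncard) :
    (S.ncard : ℝ) ≤ F.ncard +
      2 * ((nbhd G A).ncard - (closure' G X A).ncard : ℝ) * ψ / (d - ψ) := by
  classical
  set N : Set V := nbhd G A with hNdef
  set C : Set V := closure' G X A with hCdef
  have hdpos : ψ < d := by omega
  -- basic set inclusions
  have hNY : N ⊆ Y := by
    rintro v ⟨a, ha, hadj⟩
    rcases hbip a v hadj with ⟨_, hv⟩ | ⟨ha', _⟩
    · exact hv
    · rcases hpart a with ⟨_, h⟩ | ⟨_, h⟩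
      · exact absurd ha' h
      · exact absurd (hAX ha) h
  have hCX : C ⊆ X := fun v hv => hv.1
  -- Finset versions
  set N' : Finset V := N.toFinset with hN'
  set C' : Finset V := C.toFinset with hC'
  set S' : Finset V := S.toFinset with hS'
  set F' : Finset V := F.toFinset with hF'
  set X' : Finset V := X.toFinset with hX'
  have hCS' : C' ⊆ S' := Set.toFinset_subset_toFinset.mpr hS
  have hSX' : S' ⊆ X' := Set.toFinset_subset_toFinset.mpr hSX
  have hCX' : C' ⊆ X' := Set.toFinset_subset_toFinset.mpr hCX
  have hFN' : F' ⊆ N' := Set.toFinset_subset_toFinset.mpr hF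
  -- full degrees into N for vertices of C
  have hdegC : ∀ u ∈ C', (N'.filter (G.Adj u)).card = d := by
    intro u hu
    rw [Set.mem_toFinset] at hu
    have heq : N'.filter (G.Adj u) = G.neighborFinset u := by
      ext v
      simp only [Finset.mem_filter, SimpleGraph.mem_neighborFinset, hN', Set.mem_toFinset]
      exact ⟨fun h => h.2, fun h => ⟨hu.2 h, h⟩⟩
    rw [heq, SimpleGraph.card_neighborFinset_eq_degree, hreg]
  -- full degrees into X for vertices of N
  have hdegN : ∀ v ∈ N', (X'.filter (G.Adj v)).card = d := by
    intro v hv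
    rw [Set.mem_toFinset] at hv
    have hvY : v ∈ Y := hNY hv
    have heq : X'.filter (G.Adj v) = G.neighborFinset v := by
      ext w
      simp only [Finset.mem_filter, SimpleGraph.mem_neighborFinset, hX', Set.mem_toFinset]
      refine ⟨fun h => h.2, fun h => ⟨?_, h⟩⟩
      rcases hbip v w h with ⟨hvX, _⟩ | ⟨_, hwX⟩
      · rcases hpart v with ⟨_, h'⟩ | ⟨_, h'⟩
        · exact absurd hvY h'
        · exact absurd hvX h'
      · exact hwX
    rw [heq, SimpleGraph.card_neighborFinset_eq_degree, hreg]
  -- lower bound for vertices of S into N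
  have hlow1 : ∀ u ∈ S' \ C', d - ψ ≤ (N'.filter (G.Adj u)).card := by
    intro u hu
    have huS : u ∈ S := by
      have := (Finset.mem_sdiff.mp hu).1
      rwa [hS', Set.mem_toFinset] at this
    calc d - ψ ≤ (G.neighborSet u ∩ F).ncard := hdF u huS
      _ = (F'.filter (G.Adj u)).card := ncard_inter_eq G u F
      _ ≤ (N'.filter (G.Adj u)).card :=
          Finset.card_le_card (Finset.filter_subset_filter _ hFN')
  -- lower bound for vertices of N \ F into X \ S
  have hlow2 : ∀ v ∈ N' \ F', d - ψ ≤ ((X' \ S').filter (G.Adj v)).card := by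
    intro v hv
    rw [Finset.mem_sdiff, hN', hF', Set.mem_toFinset, Set.mem_toFinset] at hv
    have hvYF : v ∈ Y \ F := ⟨hNY hv.1, hv.2⟩
    calc d - ψ ≤ (G.neighborSet v ∩ (X \ S)).ncard := hdS v hvYF
      _ = ((X \ S).toFinset.filter (G.Adj v)).card := ncard_inter_eq G v (X \ S)
      _ = ((X' \ S').filter (G.Adj v)).card := by rw [Set.toFinset_diff]
  -- abbreviations for cardinalities
  set s := S'.card with hs
  set a := C'.card with ha
  set g := N'.card with hg
  set f := F'.card with hf
  have has : a ≤ s := Finset.card_le_card hCS'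
  have hfg : f ≤ g := Finset.card_le_card hFN'
  -- edge counting
  have step1 : (s - a) * (d - ψ) ≤ ec G (S' \ C') N' := by
    have := Finset.card_nsmul_le_sum (S' \ C')
      (fun u => (N'.filter (G.Adj u)).card) (d - ψ) hlow1
    rwa [smul_eq_mul, Finset.card_sdiff_of_subset hCS'] at this
  have step2 : (g - f) * (d - ψ) ≤ ec G (N' \ F') (X' \ S') := by
    have := Finset.card_nsmul_le_sum (N' \ F')
      (fun v => ((X' \ S').filter (G.Adj v)).card) (d - ψ) hlow2
    rwa [smul_eq_mul, Finset.card_sdiff_of_subset hFN'] at this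
  have step3 : ec G (S' \ C') N' = ec G N' (S' \ C') := ec_comm G _ _
  have step4 : ec G (N' \ F') (X' \ S') ≤ ec G N' (X' \ S') :=
    ec_mono_left G _ (Finset.sdiff_subset)
  have hdisj : Disjoint (S' \ C') (X' \ S') := by
    rw [Finset.disjoint_left]
    intro x hx hx'
    exact (Finset.mem_sdiff.mp hx').2 (Finset.mem_sdiff.mp hx).1
  have step5 : ec G N' (S' \ C') + ec G N' (X' \ S') = ec G N' ((S' \ C') ∪ (X' \ S')) :=
    (ec_union_right G N' hdisj).symm
  have hsub : (S' \ C') ∪ (X' \ S') ⊆ X' \ C' := by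
    intro x hx
    rcases Finset.mem_union.mp hx with h | h
    · rw [Finset.mem_sdiff] at h ⊢
      exact ⟨hSX' h.1, h.2⟩
    · rw [Finset.mem_sdiff] at h ⊢
      exact ⟨h.1, fun hc => h.2 (hCS' hc)⟩
  have step6 : ec G N' ((S' \ C') ∪ (X' \ S')) ≤ ec G N' (X' \ C') :=
    ec_mono_right G N' hsub
  have step7 : ec G N' (X' \ C') + ec G N' C' = ec G N' X' := by
    rw [← ec_union_right G N' Finset.sdiff_disjoint,
      Finset.sdiff_union_of_subset hCX']
  have step8 : ec G N' C' = a * d := by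
    rw [ec_comm]
    unfold ec
    rw [Finset.sum_congr rfl hdegC, Finset.sum_const, smul_eq_mul]
  have step9 : ec G N' X' = g * d := by
    unfold ec
    rw [Finset.sum_congr rfl hdegN, Finset.sum_const, smul_eq_mul]
  have hag : a ≤ g := by
    have h1 : a * d ≤ g * d := by
      rw [← step8, ← step9]
      exact ec_mono_right G N' hCX'
    exact Nat.le_of_mul_le_mul_right h1 (by omega)
  -- the main counting inequality in ℕ
  have hmain : (s - a) * (d - ψ) + (g - f) * (d - ψ) + a * d ≤ g * d := by
    calc (s - a) * (d - ψ) + (g - f) * (d - ψ) + a * d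
        ≤ ec G (S' \ C') N' + ec G (N' \ F') (X' \ S') + a * d := by
          exact Nat.add_le_add_right (Nat.add_le_add step1 step2) _
      _ ≤ ec G N' (S' \ C') + ec G N' (X' \ S') + a * d := by
          rw [step3]; exact Nat.add_le_add_right (Nat.add_le_add_left step4 _) _
      _ = ec G N' ((S' \ C') ∪ (X' \ S')) + a * d := by rw [step5]
      _ ≤ ec G N' (X' \ C') + a * d := Nat.add_le_add_right step6 _
      _ = ec G N' X' := by rw [← step8, step7]
      _ = g * d := step9
  -- pass to the reals
  have hncS : S.ncard = s := Set.ncard_eq_toFinset_card' S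
  have hncF : F.ncard = f := Set.ncard_eq_toFinset_card' F
  have hncN : N.ncard = g := Set.ncard_eq_toFinset_card' N
  have hncC : C.ncard = a := Set.ncard_eq_toFinset_card' C
  rw [hncS, hncF, hncN, hncC]
  have hψd' : ψ ≤ d := le_of_lt hdpos
  have hcast : ((s : ℝ) - a) * ((d : ℝ) - ψ) + ((g : ℝ) - f) * ((d : ℝ) - ψ)
      + (a : ℝ) * d ≤ (g : ℝ) * d := by
    have := hmain
    zify [has, hfg, hψd'] at this
    exact_mod_cast this
  have hpos : (0 : ℝ) < (d : ℝ) - ψ := by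
    have : (ψ : ℝ) < d := by exact_mod_cast hdpos
    linarith
  have hga : (a : ℝ) ≤ g := by exact_mod_cast hag
  have hψnn : (0 : ℝ) ≤ ψ := by positivity
  rw [← sub_le_iff_le_add', le_div_iff₀ hpos]
  nlinarith [hcast, mul_nonneg (sub_nonneg.mpr hga) hψnn]
end
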